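/- arXiv:1505.04927 — 4 statements merged into one kernel-verified Lean document; each statement's English description precedes it below -/
import Mathlib

section
/- Let n ∈ ℕ, let ω be a random vector in ℝ^n, and let γ > 1 and C₁, C₂ ∈ (0,∞). Suppose that for every convex 1-Lipschitz function f : ℝ^n → ℝ and every median M_f of f(ω) one has P(|f(ω) − M_f| ≥ t) ≤ C₁ exp(−t^γ/C₂) for all t ≥ 0. Then, with C₁' := C₁² and C₂' := 2^{γ−1} C₂, for every convex set A ⊆ ℝ^n and every t ≥ 0 one has P(ω ∈ A) · P(d(ω, A) > t) ≤ C₁' exp(−t^γ/C₂'). -/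
/-!
The distance `d(·, A)` to a convex set `A` is convex and `1`-Lipschitz, so it concentrates
around a median `M ≥ 0`. On the event `ω ∈ A` we have `|d - M| = M`, and on `d > t` we have
`|d - M| ≥ s := max (t - M) 0`. Multiplying the two tail bounds and using
`t ^ γ ≤ (M + s) ^ γ ≤ 2 ^ (γ - 1) * (M ^ γ + s ^ γ)` gives the claim.
-/

open MeasureTheory Metric Filter Set ProbabilityTheory Real
open scoped ENNReal

theorem exists_median (μ : Measure ℝ) [IsProbabilityMeasure μ] :
    ∃ M : ℝ, (1/2 : ℝ≥0∞) ≤ μ (Ici M) ∧ (1/2 : ℝ≥0∞) ≤ μ (Iic M) := by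
  set F := cdf μ
  set S := {m | (1/2 : ℝ) ≤ F m}
  have hS : S.Nonempty :=
    ((tendsto_cdf_atTop μ).eventually (eventually_ge_nhds (by norm_num))).exists
  obtain ⟨b, hb⟩ := eventually_atBot.1
    ((tendsto_cdf_atBot μ).eventually (eventually_lt_nhds (by norm_num : (0 : ℝ) < 1/2)))
  have hbdd : BddBelow S := ⟨b, fun m hm => le_of_not_gt fun hmb => (hb m hmb.le).not_ge hm⟩
  have half_eq : (1/2 : ℝ≥0∞) = ENNReal.ofReal (1/2) := by simp
  refine ⟨sInf S, ?_, ?_⟩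
  · have hleft : Function.leftLim F (sInf S) ≤ 1/2 := by
      refine le_of_tendsto (F.mono.tendsto_leftLim _) ?_
      filter_upwards [self_mem_nhdsWithin] with m hm
      exact le_of_not_ge fun h => (csInf_le hbdd h).not_gt hm
    rw [← measure_cdf μ, StieltjesFunction.measure_Ici _ (tendsto_cdf_atTop μ), half_eq]
    exact ENNReal.ofReal_le_ofReal (by linarith)
  · have hright : (1/2 : ℝ) ≤ F (sInf S) := by
      refine ge_of_tendsto ((F.right_continuous _).mono Ioi_subset_Ici_self) ?_
      filter_upwards [self_mem_nhdsWithin] with m hm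
      obtain ⟨s, hs, hsm⟩ := (csInf_lt_iff hbdd hS).1 hm
      exact hs.trans (F.mono hsm.le)
    rw [← ofReal_cdf, half_eq]
    exact ENNReal.ofReal_le_ofReal hright

theorem exists_median_of_measurable {Ω : Type*} [MeasurableSpace Ω] (P : Measure Ω)
    [IsProbabilityMeasure P] {g : Ω → ℝ} (hg : Measurable g) :
    ∃ M : ℝ, (1/2 : ℝ≥0∞) ≤ P {x | M ≤ g x} ∧ (1/2 : ℝ≥0∞) ≤ P {x | g x ≤ M} := by
  have := Measure.isProbabilityMeasure_map (μ := P) hg.aemeasurable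
  obtain ⟨M, hM₁, hM₂⟩ := exists_median (P.map g)
  rw [Measure.map_apply hg measurableSet_Ici] at hM₁
  rw [Measure.map_apply hg measurableSet_Iic] at hM₂
  exact ⟨M, hM₁, hM₂⟩

theorem Convex.convexOn_infDist {E : Type*} [NormedAddCommGroup E] [NormedSpace ℝ E]
    {A : Set E} (hA : Convex ℝ A) : ConvexOn ℝ univ (infDist · A) := by
  rcases A.eq_empty_or_nonempty with rfl | hne
  · simpa using convexOn_const (0 : ℝ) convex_univ
  refine ⟨convex_univ, fun x _ y _ a b ha hb hab => le_of_forall_pos_le_add fun ε hε => ?_⟩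
  obtain ⟨z₁, hz₁, hxz₁⟩ := (infDist_lt_iff hne).1 (lt_add_of_pos_right (infDist x A) hε)
  obtain ⟨z₂, hz₂, hyz₂⟩ := (infDist_lt_iff hne).1 (lt_add_of_pos_right (infDist y A) hε)
  calc infDist (a • x + b • y) A
      ≤ dist (a • x + b • y) (a • z₁ + b • z₂) := infDist_le_dist_of_mem (hA hz₁ hz₂ ha hb hab)
    _ ≤ a * dist x z₁ + b * dist y z₂ := by
      refine (dist_add_add_le _ _ _ _).trans_eq ?_
      rw [dist_smul₀, dist_smul₀, Real.norm_of_nonneg ha, Real.norm_of_nonneg hb]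
    _ ≤ a * (infDist x A + ε) + b * (infDist y A + ε) := by gcongr
    _ = a • infDist x A + b • infDist y A + ε := by
      simp only [smul_eq_mul]
      linear_combination ε * hab

theorem Real.add_rpow_le_two_rpow_mul_add_rpow {a b p : ℝ} (ha : 0 ≤ a) (hb : 0 ≤ b)
    (hp : 1 ≤ p) : (a + b) ^ p ≤ 2 ^ (p - 1) * (a ^ p + b ^ p) := by
  lift a to NNReal using ha
  lift b to NNReal using hb
  exact_mod_cast NNReal.rpow_add_le_mul_rpow_add_rpow a b hp

theorem exp_neg_rpow_div_mul_exp_neg_rpow_div_le {a b t γ C : ℝ} (ha : 0 ≤ a) (hb : 0 ≤ b)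
    (ht : 0 ≤ t) (htab : t ≤ a + b) (hγ : 1 ≤ γ) (hC : 0 < C) :
    exp (-(a ^ γ) / C) * exp (-(b ^ γ) / C) ≤ exp (-(t ^ γ) / (2 ^ (γ - 1) * C)) := by
  have htγ : t ^ γ ≤ 2 ^ (γ - 1) * (a ^ γ + b ^ γ) :=
    (rpow_le_rpow ht htab (by linarith)).trans (add_rpow_le_two_rpow_mul_add_rpow ha hb hγ)
  rw [← exp_add, exp_le_exp, ← add_div, ← neg_add, neg_div, neg_div, neg_le_neg_iff,
    div_le_div_iff₀ (by positivity) hC]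
  nlinarith

theorem measureReal_eq_zero_mul_measureReal_gt_le {Ω : Type*} [MeasurableSpace Ω]
    {P : Measure Ω} [IsProbabilityMeasure P] {g : Ω → ℝ} (hg : ∀ x, 0 ≤ g x) {M γ C₁ C₂ : ℝ}
    (hM : (1/2 : ℝ≥0∞) ≤ P {x | g x ≤ M})
    (htail : ∀ s, 0 ≤ s → P.real {x | s ≤ |g x - M|} ≤ C₁ * exp (-(s ^ γ) / C₂))
    (hγ : 1 ≤ γ) (hC₂ : 0 < C₂) {t : ℝ} (ht : 0 ≤ t) :
    P.real {x | g x = 0} * P.real {x | t < g x}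
      ≤ C₁ ^ 2 * exp (-(t ^ γ) / (2 ^ (γ - 1) * C₂)) := by
  have hM₀ : 0 ≤ M := by
    by_contra! hM₀
    have : {x | g x ≤ M} = ∅ := eq_empty_of_forall_notMem fun x (hx : g x ≤ M) =>
      (hg x).not_gt (hx.trans_lt hM₀)
    simp [this] at hM
  set s := max (t - M) 0
  have hzero : P.real {x | g x = 0} ≤ C₁ * exp (-(M ^ γ) / C₂) :=
    (measureReal_mono fun x (hx : g x = 0) => by simp [hx, abs_of_nonneg hM₀]).trans
      (htail M hM₀)
  have hgt : P.real {x | t < g x} ≤ C₁ * exp (-(s ^ γ) / C₂) :=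
    (measureReal_mono fun x (hx : t < g x) => show s ≤ |g x - M| from
      max_le (by linarith [le_abs_self (g x - M)]) (abs_nonneg _)).trans
      (htail s (le_max_right _ _))
  calc P.real {x | g x = 0} * P.real {x | t < g x}
      ≤ (C₁ * exp (-(M ^ γ) / C₂)) * (C₁ * exp (-(s ^ γ) / C₂)) :=
        mul_le_mul hzero hgt measureReal_nonneg (measureReal_nonneg.trans hzero)
    _ = C₁ ^ 2 * (exp (-(M ^ γ) / C₂) * exp (-(s ^ γ) / C₂)) := by ring
    _ ≤ C₁ ^ 2 * exp (-(t ^ γ) / (2 ^ (γ - 1) * C₂)) :=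
        mul_le_mul_of_nonneg_left (exp_neg_rpow_div_mul_exp_neg_rpow_div_le hM₀
          (le_max_right _ _) ht (by linarith [le_max_left (t - M) 0]) hγ hC₂) (sq_nonneg C₁)

theorem stmt_0_general
    {Ω : Type*} [MeasurableSpace Ω] (P : Measure Ω) [IsProbabilityMeasure P]
    (n : ℕ) (ω : Ω → EuclideanSpace ℝ (Fin n)) (hω : Measurable ω)
    (γ C₁ C₂ : ℝ) (hγ : 1 < γ) (hC₂ : 0 < C₂)
    (hconc : ∀ f : EuclideanSpace ℝ (Fin n) → ℝ,
      ConvexOn ℝ Set.univ f → LipschitzWith 1 f →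
      ∀ Mf : ℝ,
        (1/2 : ℝ≥0∞) ≤ P {x | Mf ≤ f (ω x)} →
        (1/2 : ℝ≥0∞) ≤ P {x | f (ω x) ≤ Mf} →
        ∀ t : ℝ, 0 ≤ t →
          (P {x | t ≤ |f (ω x) - Mf|}).toReal ≤ C₁ * Real.exp (-(t ^ γ) / C₂)) :
    ∀ A : Set (EuclideanSpace ℝ (Fin n)), Convex ℝ A →
      ∀ t : ℝ, 0 ≤ t →
        (P {x | ω x ∈ A}).toReal * (P {x | t < infDist (ω x) A}).toReal
          ≤ C₁ ^ 2 * Real.exp (-(t ^ γ) / ((2:ℝ) ^ (γ - 1) * C₂)) := by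
  intro A hA t ht
  obtain ⟨M, hM₁, hM₂⟩ :=
    exists_median_of_measurable P ((continuous_infDist_pt A).measurable.comp hω)
  have htail := hconc (infDist · A) hA.convexOn_infDist (lipschitz_infDist_pt A) M hM₁ hM₂
  calc (P {x | ω x ∈ A}).toReal * (P {x | t < infDist (ω x) A}).toReal
      ≤ P.real {x | infDist (ω x) A = 0} * P.real {x | t < infDist (ω x) A} :=
        mul_le_mul_of_nonneg_right (measureReal_mono fun x hx => infDist_zero_of_mem hx)
          measureReal_nonneg
    _ ≤ C₁ ^ 2 * Real.exp (-(t ^ γ) / ((2:ℝ) ^ (γ - 1) * C₂)) :=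
        measureReal_eq_zero_mul_measureReal_gt_le (fun _ => infDist_nonneg) hM₂ htail hγ.le hC₂ ht

/-- If the disorder `ω` satisfies a concentration inequality for convex
`1`-Lipschitz functions around their medians, then it satisfies a concentration
inequality for the distance from convex sets, with `C₁' = C₁²` and `C₂' = 2^(γ-1) C₂`. -/
theorem stmt_0
    {Ω : Type*} [MeasurableSpace Ω] (P : Measure Ω) [IsProbabilityMeasure P]
    (n : ℕ) (ω : Ω → EuclideanSpace ℝ (Fin n)) (hω : Measurable ω)
    (γ C₁ C₂ : ℝ) (hγ : 1 < γ) (hC₁ : 0 < C₁) (hC₂ : 0 < C₂)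
    (hconc : ∀ f : EuclideanSpace ℝ (Fin n) → ℝ,
      ConvexOn ℝ Set.univ f → LipschitzWith 1 f →
      ∀ Mf : ℝ,
        (1/2 : ℝ≥0∞) ≤ P {x | Mf ≤ f (ω x)} →
        (1/2 : ℝ≥0∞) ≤ P {x | f (ω x) ≤ Mf} →
        ∀ t : ℝ, 0 ≤ t →
          (P {x | t ≤ |f (ω x) - Mf|}).toReal ≤ C₁ * Real.exp (-(t ^ γ) / C₂)) :
    ∀ A : Set (EuclideanSpace ℝ (Fin n)), Convex ℝ A →
      ∀ t : ℝ, 0 ≤ t →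
        (P {x | ω x ∈ A}).toReal * (P {x | t < infDist (ω x) A}).toReal
          ≤ C₁ ^ 2 * Real.exp (-(t ^ γ) / ((2:ℝ) ^ (γ - 1) * C₂)) :=
  stmt_0_general P n ω hω γ C₁ C₂ hγ hC₂ hconc
end

section
/- Let n ∈ ℕ, let ω be a random vector in ℝ^n, and let γ > 0 and C₁', C₂' ∈ (0,∞). Suppose that for every convex set A ⊆ ℝ^n and every t ≥ 0 one has P(ω ∈ A) · P(d(ω, A) > t) ≤ C₁' exp(−t^γ/C₂'). Then for every differentiable convex function f : ℝ^n → ℝ, every a ∈ ℝ and every t, c ∈ (0,∞): P(f(ω) ≤ a − t) · P(f(ω) ≥ a and |∇f(ω)| ≤ c) ≤ C₁' exp(−(t/c)^γ/C₂'), where |∇f(ω)| denotes the Euclidean norm of the gradient of f at ω. -/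
open MeasureTheory Metric

/-!
If `f(x) ≥ a` and `|∇f(x)| ≤ c`, then by convexity `f` lies above its tangent plane at `x`,
so every point `z` of the convex sublevel set `A = {f ≤ a - t}` satisfies
`t ≤ f x - f z ≤ ⟪∇f x, x - z⟫ ≤ c |x - z|`, i.e. `d(x, A) ≥ t / c`.
Distance concentration for `A` at every level `s < t / c`, followed by `s → t / c`,
gives the bound.
-/

theorem ConvexOn.add_le_of_hasFDerivAt {E : Type*} [NormedAddCommGroup E] [NormedSpace ℝ E]
    {S : Set E} {f : E → ℝ} {f' : E →L[ℝ] ℝ} {x y : E}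
    (hf : ConvexOn ℝ S f) (hx : x ∈ S) (hy : y ∈ S) (hf' : HasFDerivAt f f' x) :
    f x + f' (y - x) ≤ f y := by
  let L : ℝ →ᵃ[ℝ] E := AffineMap.lineMap x y
  have hφ : HasDerivAt (f ∘ L) (f' (y - x)) 0 := by
    have hL0 : L 0 = x := AffineMap.lineMap_apply_zero x y
    exact (hL0 ▸ hf').comp_hasDerivAt 0 AffineMap.hasDerivAt_lineMap
  have hslope := (hf.comp_affineMap L).le_slope_of_hasDerivAt
    (by simpa [L] using hx) (by simpa [L] using hy) zero_lt_one hφ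
  simp only [slope_def_field, Function.comp_apply, L, AffineMap.lineMap_apply_one,
    AffineMap.lineMap_apply_zero, sub_zero, div_one] at hslope
  linarith

theorem ConvexOn.div_le_infDist_sublevel {E : Type*} [NormedAddCommGroup E]
    [InnerProductSpace ℝ E] [CompleteSpace E] {f : E → ℝ} {x : E} {a t c : ℝ}
    (hf : ConvexOn ℝ Set.univ f) (hfx : DifferentiableAt ℝ f x) (hc : 0 < c)
    (hA : {y | f y ≤ a - t}.Nonempty) (hax : a ≤ f x) (hgx : ‖gradient f x‖ ≤ c) :
    t / c ≤ infDist x {y | f y ≤ a - t} := by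
  rw [le_infDist hA]
  intro z (hz : f z ≤ a - t)
  have htangent : f x + inner ℝ (gradient f x) (z - x) ≤ f z := by
    simpa using hf.add_le_of_hasFDerivAt (Set.mem_univ x) (Set.mem_univ z)
      (hasGradientAt_iff_hasFDerivAt.mp hfx.hasGradientAt)
  have hinner : -inner ℝ (gradient f x) (z - x) ≤ c * dist x z := by
    calc -inner ℝ (gradient f x) (z - x) = inner ℝ (gradient f x) (x - z) := by
          rw [← inner_neg_right, neg_sub]
      _ ≤ ‖gradient f x‖ * ‖x - z‖ := real_inner_le_norm _ _
      _ ≤ c * dist x z := by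
          rw [dist_eq_norm]; exact mul_le_mul_of_nonneg_right hgx (norm_nonneg _)
  rw [div_le_iff₀' hc]
  linarith

theorem le_mul_exp_neg_rpow_of_forall_lt {K C₁ C₂ γ r : ℝ} (hr : 0 < r)
    (h : ∀ s, 0 ≤ s → s < r → K ≤ C₁ * Real.exp (-(s ^ γ) / C₂)) :
    K ≤ C₁ * Real.exp (-(r ^ γ) / C₂) := by
  have hcont : ContinuousAt (fun s : ℝ => C₁ * Real.exp (-(s ^ γ) / C₂)) r := by
    have := Real.continuousAt_rpow_const r γ (Or.inl hr.ne')
    fun_prop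
  refine ge_of_tendsto (hcont.tendsto.mono_left (nhdsWithin_le_nhds (s := Set.Iio r))) ?_
  filter_upwards [Ioo_mem_nhdsLT hr] with s hs
  exact h s hs.1.le hs.2

theorem stmt_3_general
    {Ω : Type*} [MeasurableSpace Ω] (P : Measure Ω) [IsProbabilityMeasure P]
    (n : ℕ) (ω : Ω → EuclideanSpace ℝ (Fin n))
    (γ C₁' C₂' : ℝ)
    (hdist : ∀ A : Set (EuclideanSpace ℝ (Fin n)), Convex ℝ A →
      ∀ t : ℝ, 0 ≤ t →
        (P {x | ω x ∈ A}).toReal * (P {x | t < infDist (ω x) A}).toReal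
          ≤ C₁' * Real.exp (-(t ^ γ) / C₂')) :
    ∀ f : EuclideanSpace ℝ (Fin n) → ℝ,
      ConvexOn ℝ Set.univ f → Differentiable ℝ f →
      ∀ a t c : ℝ, 0 < t → 0 < c →
        (P {x | f (ω x) ≤ a - t}).toReal *
          (P {x | a ≤ f (ω x) ∧ ‖gradient f (ω x)‖ ≤ c}).toReal
            ≤ C₁' * Real.exp (-((t / c) ^ γ) / C₂') := by
  intro f hf hfd a t c ht hc
  set A := {y | f y ≤ a - t}
  refine le_mul_exp_neg_rpow_of_forall_lt (div_pos ht hc) fun s hs0 hs => ?_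
  rcases A.eq_empty_or_nonempty with hA | hA
  · have hempty : {x | f (ω x) ≤ a - t} = ∅ :=
      Set.eq_empty_of_forall_notMem fun x hx => Set.eq_empty_iff_forall_notMem.mp hA (ω x) hx
    -- the concentration hypothesis for `∅` says that the bound is nonnegative
    simpa [hempty] using hdist ∅ convex_empty s hs0
  have hsub : {x | a ≤ f (ω x) ∧ ‖gradient f (ω x)‖ ≤ c} ⊆ {x | s < infDist (ω x) A} :=
    fun x ⟨hax, hgx⟩ => hs.trans_le (hf.div_le_infDist_sublevel (hfd _) hc hA hax hgx)
  calc (P {x | f (ω x) ≤ a - t}).toReal *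
        (P {x | a ≤ f (ω x) ∧ ‖gradient f (ω x)‖ ≤ c}).toReal
      ≤ (P {x | ω x ∈ A}).toReal * (P {x | s < infDist (ω x) A}).toReal :=
        mul_le_mul_of_nonneg_left (ENNReal.toReal_mono (measure_ne_top P _) (measure_mono hsub))
          ENNReal.toReal_nonneg
    _ ≤ C₁' * Real.exp (-(s ^ γ) / C₂') := hdist A (by simpa using hf.convex_le (a - t)) s hs0

/-- Under distance concentration for convex sets, every differentiable
convex function `f` satisfies
`P(f(ω) ≤ a - t) · P(f(ω) ≥ a, |∇f(ω)| ≤ c) ≤ C₁' exp(-(t/c)^γ / C₂')`. -/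
theorem stmt_3
    {Ω : Type*} [MeasurableSpace Ω] (P : Measure Ω) [IsProbabilityMeasure P]
    (n : ℕ) (ω : Ω → EuclideanSpace ℝ (Fin n)) (hω : Measurable ω)
    (γ C₁' C₂' : ℝ) (hγ : 0 < γ) (hC₁ : 0 < C₁') (hC₂ : 0 < C₂')
    (hdist : ∀ A : Set (EuclideanSpace ℝ (Fin n)), Convex ℝ A →
      ∀ t : ℝ, 0 ≤ t →
        (P {x | ω x ∈ A}).toReal * (P {x | t < infDist (ω x) A}).toReal
          ≤ C₁' * Real.exp (-(t ^ γ) / C₂')) :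
    ∀ f : EuclideanSpace ℝ (Fin n) → ℝ,
      ConvexOn ℝ Set.univ f → Differentiable ℝ f →
      ∀ a t c : ℝ, 0 < t → 0 < c →
        (P {x | f (ω x) ≤ a - t}).toReal *
          (P {x | a ≤ f (ω x) ∧ ‖gradient f (ω x)‖ ≤ c}).toReal
            ≤ C₁' * Real.exp (-((t / c) ^ γ) / C₂') :=
  stmt_3_general P n ω γ C₁' C₂' hdist
end

section
/- For every α ∈ (0,1) there exists a constant c_α ∈ (0,∞) such that for every integer n ≥ 2, every γ ∈ (0, 1/4) and every y ∈ [0,1]: ∫_{n−γ}^{n} ∫_{n−1}^{w} (1 − y)^α (z − y)^{−(1+α)} (w − z)^{−(1−α)} (n − w)^{−α} dz dw ≤ c_α γ^{1−α} n^{−(1+α)}. -/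
/-!
Write `f z = (1 - y)^α (z - y)^{-(1+α)}` and `g z = (w - z)^{α-1}`. For `w ≥ n - 1/4` we have
`g z ≤ 16` when `z ≤ n - 1/2` and `f z ≤ 16 n^{-(1+α)}` when `z ≥ n - 1/2`, hence
`f g ≤ 16 f + 16 n^{-(1+α)} g` on `[n - 1, w]`. Both terms integrate to `O(n^{-(1+α)} / α)`:
`g` explicitly, and `f` by a pointwise bound if `n ≥ 3`, while for `n < 3` the tail integral
gives `(1 - y)^α ∫_{n-1-y}^∞ x^{-(1+α)} dx ≤ 1/α`. Integrating this uniform bound on the inner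
integral against `(n - w)^{-α}` over `[n - γ, n]` produces the factor `γ^{1-α} / (1 - α)`.
-/

open MeasureTheory intervalIntegral Set Real

theorem intervalIntegral.integral_mono_on_of_nonneg {f g : ℝ → ℝ} {a b : ℝ} (hab : a ≤ b)
    (hg : IntervalIntegrable g volume a b) (hf : ∀ x ∈ Icc a b, 0 ≤ f x)
    (h : ∀ x ∈ Icc a b, f x ≤ g x) : ∫ x in a..b, f x ≤ ∫ x in a..b, g x := by
  rw [integral_of_le hab, integral_of_le hab]
  exact integral_mono_of_nonneg
    (ae_restrict_of_forall_mem measurableSet_Ioc fun x hx => hf x (Ioc_subset_Icc_self hx)) hg.1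
    (ae_restrict_of_forall_mem measurableSet_Ioc fun x hx => h x (Ioc_subset_Icc_self hx))

theorem intervalIntegrable_sub_rpow {r : ℝ} (hr : -1 < r) (a b : ℝ) :
    IntervalIntegrable (fun z => (b - z) ^ r) volume a b := by
  simpa using (intervalIntegrable_rpow' hr (a := b - a) (b := 0)).comp_sub_left b

theorem integral_sub_rpow {r : ℝ} (hr : -1 < r) (a b : ℝ) :
    ∫ z in a..b, (b - z) ^ r = (b - a) ^ (r + 1) / (r + 1) := by
  rw [intervalIntegral.integral_comp_sub_left (fun x => x ^ r), sub_self,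
    integral_rpow (Or.inl hr), zero_rpow (by linarith), sub_zero]

theorem integral_rpow_neg_one_sub_le {α a b : ℝ} (hα : 0 < α) (ha : 0 < a) (hab : a ≤ b) :
    ∫ x in a..b, x ^ (-(1 + α)) ≤ a ^ (-α) / α := by
  have h0 : (0:ℝ) ∉ uIcc a b := by
    rw [uIcc_of_le hab]; exact fun h => by linarith [h.1]
  rw [integral_rpow (Or.inr ⟨by linarith, h0⟩), show -(1 + α) + 1 = -α by ring,
    show (b ^ (-α) - a ^ (-α)) / -α = (a ^ (-α) - b ^ (-α)) / α by ring]
  gcongr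
  linarith [rpow_nonneg (ha.le.trans hab) (-α)]

theorem rpow_neg_le_sq_mul_rpow_neg {x N k p : ℝ} (hN : 0 < N) (hk : 1 ≤ k) (hx : N ≤ k * x)
    (hp0 : 0 ≤ p) (hp2 : p ≤ 2) : x ^ (-p) ≤ k ^ 2 * N ^ (-p) := by
  have hk0 : 0 < k := by linarith
  calc x ^ (-p) ≤ (N / k) ^ (-p) :=
        rpow_le_rpow_of_nonpos (by positivity) (by rw [div_le_iff₀ hk0]; linarith) (by linarith)
    _ = k ^ p * N ^ (-p) := by
        rw [div_rpow hN.le hk0.le, rpow_neg hk0.le, div_eq_mul_inv, inv_inv, mul_comm]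
    _ ≤ k ^ (2:ℝ) * N ^ (-p) := by gcongr
    _ = k ^ 2 * N ^ (-p) := by rw [rpow_two]

section

variable {α N y w : ℝ}

theorem integral_one_sub_rpow_mul_sub_rpow_le (hα0 : 0 < α) (hα1 : α ≤ 1) (hN : 2 ≤ N)
    (hy0 : 0 ≤ y) (hy1 : y < 1) (hw : w ∈ Icc (N - 1) N) :
    ∫ z in (N - 1)..w, (1 - y) ^ α * (z - y) ^ (-(1 + α)) ≤ 9 / α * N ^ (-(1 + α)) := by
  have hs : (1 - y) ^ α ≤ 1 := rpow_le_one (by linarith) (by linarith) hα0.le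
  have hNα : 0 ≤ N ^ (-(1 + α)) := rpow_nonneg (by linarith) _
  rw [intervalIntegral.integral_const_mul]
  rcases le_or_gt 3 N with hN3 | hN3
  · have hbound : ∀ z ∈ uIoc (N - 1) w,
        ‖(z - y) ^ (-(1 + α))‖ ≤ 9 * N ^ (-(1 + α)) := by
      intro z hz
      rw [uIoc_of_le hw.1] at hz
      rw [norm_of_nonneg (rpow_nonneg (by linarith [hz.1]) _)]
      exact (rpow_neg_le_sq_mul_rpow_neg (k := 3) (N := N) (by linarith) (by norm_num)
        (by linarith [hz.1]) (by linarith) (by linarith)).trans_eq (by norm_num)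
    have hint := (norm_integral_le_of_norm_le_const hbound).trans'
      (le_abs_self (∫ z in (N - 1)..w, (z - y) ^ (-(1 + α))))
    have hlen : |w - (N - 1)| ≤ 1 := by rw [abs_le]; constructor <;> linarith [hw.1, hw.2]
    have hI : 0 ≤ ∫ z in (N - 1)..w, (z - y) ^ (-(1 + α)) :=
      integral_nonneg hw.1 fun z hz => rpow_nonneg (by linarith [hz.1]) _
    calc (1 - y) ^ α * ∫ z in (N - 1)..w, (z - y) ^ (-(1 + α))
        ≤ 1 * (9 * N ^ (-(1 + α)) * 1) := by
          gcongr
          exact hint.trans (by gcongr)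
      _ ≤ 9 / α * N ^ (-(1 + α)) := by
          rw [one_mul, mul_one]; gcongr; exact le_div_self (by norm_num) hα0 hα1
  · have hint : ∫ z in (N - 1)..w, (z - y) ^ (-(1 + α)) ≤ (1 - y) ^ (-α) / α := by
      rw [intervalIntegral.integral_comp_sub_right (fun x => x ^ (-(1 + α)))]
      refine (integral_rpow_neg_one_sub_le (a := N - 1 - y) (b := w - y) hα0 (by linarith)
        (by linarith [hw.1])).trans ?_
      exact div_le_div_of_nonneg_right
        (rpow_le_rpow_of_nonpos (by linarith) (by linarith) (by linarith)) hα0.le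
    have hone : 1 ≤ 9 * N ^ (-(1 + α)) := by
      simpa using (rpow_neg_le_sq_mul_rpow_neg (x := 1) (k := 3) (N := N) (p := 1 + α)
        (by linarith) (by norm_num) (by linarith) (by linarith) (by linarith)).trans_eq
        (by norm_num)
    calc (1 - y) ^ α * ∫ z in (N - 1)..w, (z - y) ^ (-(1 + α))
        ≤ (1 - y) ^ α * ((1 - y) ^ (-α) / α) := by
          gcongr
      _ = 1 / α := by
          rw [rpow_neg (by linarith), mul_div_assoc', mul_inv_cancel₀ (by positivity)]
      _ ≤ 9 / α * N ^ (-(1 + α)) := by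
          rw [div_mul_eq_mul_div]; gcongr

theorem inner_integrand_nonneg {z : ℝ} (hN : 2 ≤ N) (hy1 : y ≤ 1) (hz : N - 1 ≤ z)
    (hzw : z ≤ w) :
    0 ≤ (1 - y) ^ α * (z - y) ^ (-(1 + α)) * (w - z) ^ (-(1 - α)) := by
  have := rpow_nonneg (sub_nonneg.2 hy1) α
  have := rpow_nonneg (by linarith : 0 ≤ z - y) (-(1 + α))
  have := rpow_nonneg (sub_nonneg.2 hzw) (-(1 - α))
  positivity

theorem integral_inner_le (hα0 : 0 < α) (hα1 : α < 1) (hN : 2 ≤ N) (hy0 : 0 ≤ y)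
    (hy1 : y < 1) (hw : w ∈ Icc (N - 1/4) N) :
    ∫ z in (N - 1)..w, (1 - y) ^ α * (z - y) ^ (-(1 + α)) * (w - z) ^ (-(1 - α))
      ≤ 160 / α * N ^ (-(1 + α)) := by
  set C := N ^ (-(1 + α))
  have hC : 0 ≤ C := rpow_nonneg (by linarith) _
  have hNw : N - 1 ≤ w := by linarith [hw.1]
  have hf : IntervalIntegrable (fun z => (1 - y) ^ α * (z - y) ^ (-(1 + α))) volume (N - 1) w :=
    (continuousOn_const.mul ((continuousOn_id.sub continuousOn_const).rpow_const
      fun z hz => Or.inl (by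
        rw [uIcc_of_le hNw] at hz; exact (show 0 < z - y by linarith [hz.1]).ne')))
      |>.intervalIntegrable
  have hg : IntervalIntegrable (fun z => (w - z) ^ (-(1 - α))) volume (N - 1) w :=
    intervalIntegrable_sub_rpow (by linarith) _ _
  have hsplit : ∀ z ∈ Icc (N - 1) w,
      (1 - y) ^ α * (z - y) ^ (-(1 + α)) * (w - z) ^ (-(1 - α))
        ≤ 16 * ((1 - y) ^ α * (z - y) ^ (-(1 + α))) + 16 * C * (w - z) ^ (-(1 - α)) := by
    intro z ⟨hz1, hz2⟩
    have hf0 : 0 ≤ (1 - y) ^ α * (z - y) ^ (-(1 + α)) :=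
      mul_nonneg (rpow_nonneg (by linarith) _) (rpow_nonneg (by linarith) _)
    have hg0 : 0 ≤ (w - z) ^ (-(1 - α)) := rpow_nonneg (by linarith) _
    rcases le_total z (N - 1/2) with hz | hz
    · have : (w - z) ^ (-(1 - α)) ≤ 16 :=
        (rpow_neg_le_sq_mul_rpow_neg (k := 4) (N := 1) (by norm_num) (by norm_num)
          (by linarith [hw.1]) (by linarith) (by linarith)).trans_eq (by rw [one_rpow]; norm_num)
      nlinarith
    · have hs : (1 - y) ^ α ≤ 1 := rpow_le_one (by linarith) (by linarith) hα0.le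
      have : (z - y) ^ (-(1 + α)) ≤ 16 * C :=
        (rpow_neg_le_sq_mul_rpow_neg (k := 4) (N := N) (by linarith) (by norm_num) (by linarith)
          (by linarith) (by linarith)).trans_eq (by rw [show (4:ℝ) ^ 2 = 16 by norm_num])
      have : (1 - y) ^ α * (z - y) ^ (-(1 + α)) ≤ 16 * C :=
        (mul_le_of_le_one_left (rpow_nonneg (by linarith) _) hs).trans this
      nlinarith
  have hgint : ∫ z in (N - 1)..w, (w - z) ^ (-(1 - α)) ≤ 1 / α := by
    rw [integral_sub_rpow (by linarith), show -(1 - α) + 1 = α by ring]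
    gcongr
    exact rpow_le_one (by linarith) (by linarith [hw.2]) hα0.le
  calc _ ≤ ∫ z in (N - 1)..w,
          16 * ((1 - y) ^ α * (z - y) ^ (-(1 + α))) + 16 * C * (w - z) ^ (-(1 - α)) :=
        integral_mono_on_of_nonneg hNw ((hf.const_mul _).add (hg.const_mul _))
          (fun z hz => inner_integrand_nonneg hN hy1.le hz.1 hz.2) hsplit
    _ = 16 * (∫ z in (N - 1)..w, (1 - y) ^ α * (z - y) ^ (-(1 + α)))
          + 16 * C * ∫ z in (N - 1)..w, (w - z) ^ (-(1 - α)) := by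
        rw [integral_add (hf.const_mul _) (hg.const_mul _),
          intervalIntegral.integral_const_mul 16, intervalIntegral.integral_const_mul (16 * C)]
    _ ≤ 16 * (9 / α * C) + 16 * C * (1 / α) := by
        gcongr
        exact integral_one_sub_rpow_mul_sub_rpow_le hα0 hα1.le hN hy0 hy1 ⟨hNw, hw.2⟩
    _ = 160 / α * C := by ring

end

/-- For every `α ∈ (0,1)` there is `c_α < ∞` such that for all integers
`n ≥ 2`, all `γ ∈ (0,1/4)` and all `y ∈ [0,1]`,
`∫_{n-γ}^n ∫_{n-1}^w (1-y)^α (z-y)^{-(1+α)} (w-z)^{-(1-α)} (n-w)^{-α} dz dw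
  ≤ c_α γ^{1-α} n^{-(1+α)}`. -/
theorem stmt_10 (α : ℝ) (hα : α ∈ Set.Ioo (0:ℝ) 1) :
    ∃ c : ℝ, 0 < c ∧ ∀ n : ℕ, 2 ≤ n → ∀ γ : ℝ, γ ∈ Set.Ioo (0:ℝ) (1/4) →
      ∀ y : ℝ, y ∈ Set.Icc (0:ℝ) 1 →
        (∫ w in ((n:ℝ) - γ)..(n:ℝ), ∫ z in ((n:ℝ) - 1)..w,
            (1 - y) ^ α * (z - y) ^ (-(1 + α)) * (w - z) ^ (-(1 - α)) * ((n:ℝ) - w) ^ (-α))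
          ≤ c * γ ^ (1 - α) * (n:ℝ) ^ (-(1 + α)) := by
  obtain ⟨hα0, hα1⟩ := hα
  have h1α : 0 < 1 - α := sub_pos.2 hα1
  refine ⟨160 / (α * (1 - α)), by positivity, fun n hn γ ⟨hγ0, hγ⟩ y ⟨hy0, hy⟩ => ?_⟩
  have hN : (2:ℝ) ≤ n := by exact_mod_cast hn
  rcases hy.eq_or_lt with rfl | hy1
  · simp only [sub_self, zero_rpow hα0.ne', zero_mul, intervalIntegral.integral_zero]
    positivity
  calc _ = ∫ w in (n - γ : ℝ)..n, (∫ z in (n - 1 : ℝ)..w,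
          (1 - y) ^ α * (z - y) ^ (-(1 + α)) * (w - z) ^ (-(1 - α))) * ((n:ℝ) - w) ^ (-α) := by
        simp_rw [intervalIntegral.integral_mul_const]
    _ ≤ ∫ w in (n - γ : ℝ)..n, 160 / α * (n:ℝ) ^ (-(1 + α)) * ((n:ℝ) - w) ^ (-α) :=
        integral_mono_on_of_nonneg (by linarith)
          ((intervalIntegrable_sub_rpow (by linarith) _ _).const_mul _)
          (fun w hw => mul_nonneg
            (integral_nonneg (by linarith [hw.1]) fun z hz =>
              inner_integrand_nonneg hN hy1.le hz.1 hz.2)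
            (rpow_nonneg (by linarith [hw.2]) _))
          (fun w hw => mul_le_mul_of_nonneg_right
            (integral_inner_le hα0 hα1 hN hy0 hy1 ⟨by linarith [hw.1], hw.2⟩)
            (rpow_nonneg (by linarith [hw.2]) _))
    _ = 160 / α * (n:ℝ) ^ (-(1 + α)) * (γ ^ (1 - α) / (1 - α)) := by
        rw [intervalIntegral.integral_const_mul, integral_sub_rpow (by linarith), sub_sub_cancel,
          show -α + 1 = 1 - α by ring]
    _ = 160 / (α * (1 - α)) * γ ^ (1 - α) * (n:ℝ) ^ (-(1 + α)) := by
        field_simp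
end

section
/- Let (Ω, F, P) be a probability space with a filtration F₁ ⊆ F₂ ⊆ ⋯ ⊆ F, let c ≥ 1, and for each k ≥ 1 let Φ_k be a nonnegative integrable F_k-measurable random variable and A_k ∈ F_k an event. Suppose: E[Φ₁] ≤ 1/4 and E[Φ₁ 1_{A₁}] ≤ 1/(8c); and for every k ≥ 2, almost surely E[Φ_k | F_{k−1}] ≤ c, almost surely E[Φ_k | F_{k−1}] ≤ 1/4 on the complement of A_{k−1}, and almost surely E[Φ_k 1_{A_k} | F_{k−1}] ≤ 1/(8c). Then for every M ≥ 1: E[∏_{k=1}^M Φ_k] ≤ 2^{−M} and E[(∏_{k=1}^M Φ_k) 1_{A_M}] ≤ 1/(c · 2^{M+2}). -/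
/-!
Induction on `M`. The product `G = ∏_{k ≤ M} Φ_k` is nonnegative and `𝔽_M`-measurable, so
conditioning on `𝔽_M` replaces `Φ_{M+1}` by `E[Φ_{M+1} | 𝔽_M] ≤ c 1_{A_M} + 1/4`, giving
`E[G Φ_{M+1}] ≤ c E[G 1_{A_M}] + E[G]/4 ≤ 2^{-(M+2)} + 2^{-(M+2)}`; in the same way
`E[G Φ_{M+1} 1_{A_{M+1}}] ≤ E[G]/(8c)`.

`G` is integrable but not bounded, so the pull-out property is proved for Lebesgue integrals:
`∫⁻ G X = ∫⁻ G E⁻[X | m]` because the densities `X` and `E⁻[X | m]` define the same measure on `m`.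
-/

open MeasureTheory

section

variable {Ω : Type*} {m m₀ : MeasurableSpace Ω} {P : Measure[m₀] Ω}

open scoped ENNReal

theorem lintegral_mul_condLExp (hm : m ≤ m₀) [SigmaFinite (P.trim hm)] {g X : Ω → ℝ≥0∞}
    (hg : Measurable[m] g) (hX : AEMeasurable X P) :
    ∫⁻ ω, g ω * X ω ∂P = ∫⁻ ω, g ω * P⁻[X|m] ω ∂P := by
  have htrim : (P.withDensity X).trim hm = (P.withDensity P⁻[X|m]).trim hm := by
    refine @Measure.ext _ m _ _ fun s hs => ?_
    rw [trim_measurableSet_eq hm hs, trim_measurableSet_eq hm hs, withDensity_apply _ (hm s hs),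
      withDensity_apply _ (hm s hs), setLIntegral_condLExp hm P X hs]
  have hpull : ∀ Y : Ω → ℝ≥0∞, AEMeasurable Y P →
      ∫⁻ ω, g ω * Y ω ∂P = ∫⁻ ω, g ω ∂(P.withDensity Y).trim hm := fun Y hY => by
    rw [lintegral_trim hm hg,
      lintegral_withDensity_eq_lintegral_mul₀ hY (hg.mono hm le_rfl).aemeasurable]
    simp only [Pi.mul_apply, mul_comm]
  rw [hpull X hX, htrim, hpull _ (measurable_condLExp' m P X).aemeasurable]

theorem lintegral_ofReal_mul_condExp (hm : m ≤ m₀) [SigmaFinite (P.trim hm)] {g f : Ω → ℝ}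
    (hg : StronglyMeasurable[m] g) (hg₀ : 0 ≤ᵐ[P] g) (hf : Integrable f P) (hf₀ : 0 ≤ᵐ[P] f) :
    ∫⁻ ω, ENNReal.ofReal (g ω * f ω) ∂P = ∫⁻ ω, ENNReal.ofReal (g ω * P[f|m] ω) ∂P := by
  have hsplit : ∀ u : Ω → ℝ, ∫⁻ ω, ENNReal.ofReal (g ω * u ω) ∂P =
      ∫⁻ ω, ENNReal.ofReal (g ω) * ENNReal.ofReal (u ω) ∂P := fun u =>
    lintegral_congr_ae <| hg₀.mono fun ω hω => ENNReal.ofReal_mul hω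
  rw [hsplit, hsplit, lintegral_mul_condLExp hm hg.measurable.ennreal_ofReal
    hf.aemeasurable.ennreal_ofReal]
  exact lintegral_congr_ae <| (condLExp_ofReal m hf hf₀).mono fun ω hω => by simp only [hω]

theorem integral_mul_condExp (hm : m ≤ m₀) [SigmaFinite (P.trim hm)] {g f : Ω → ℝ}
    (hg : StronglyMeasurable[m] g) (hg₀ : 0 ≤ᵐ[P] g) (hf : Integrable f P) (hf₀ : 0 ≤ᵐ[P] f) :
    ∫ ω, g ω * f ω ∂P = ∫ ω, g ω * P[f|m] ω ∂P := by
  have hg' : AEStronglyMeasurable g P := (hg.mono hm).aestronglyMeasurable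
  rw [integral_eq_lintegral_of_nonneg_ae (f := fun ω => g ω * f ω) (hg₀.mul_nonneg hf₀)
      (hg'.mul hf.aestronglyMeasurable),
    integral_eq_lintegral_of_nonneg_ae (f := fun ω => g ω * P[f|m] ω)
      (hg₀.mul_nonneg (condExp_nonneg hf₀)) (hg'.mul integrable_condExp.aestronglyMeasurable),
    lintegral_ofReal_mul_condExp hm hg hg₀ hf hf₀]

theorem integrable_mul_condExp_of_condExp_le (hm : m ≤ m₀) {g f h : Ω → ℝ}
    (hg : StronglyMeasurable[m] g) (hg₀ : 0 ≤ᵐ[P] g) (hf₀ : 0 ≤ᵐ[P] f) (hfh : P[f|m] ≤ᵐ[P] h)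
    (hgh : Integrable (fun ω => g ω * h ω) P) :
    Integrable (fun ω => g ω * P[f|m] ω) P := by
  refine hgh.mono ((hg.mono hm).aestronglyMeasurable.mul integrable_condExp.aestronglyMeasurable) ?_
  filter_upwards [hg₀, condExp_nonneg (m := m) hf₀, hfh] with ω hgω hFω hFh
  rw [Real.norm_of_nonneg (mul_nonneg hgω hFω),
    Real.norm_of_nonneg (mul_nonneg hgω (hFω.trans hFh))]
  exact mul_le_mul_of_nonneg_left hFh hgω

theorem integrable_mul_of_condExp_le (hm : m ≤ m₀) [SigmaFinite (P.trim hm)] {g f h : Ω → ℝ}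
    (hg : StronglyMeasurable[m] g) (hg₀ : 0 ≤ᵐ[P] g) (hf : Integrable f P) (hf₀ : 0 ≤ᵐ[P] f)
    (hfh : P[f|m] ≤ᵐ[P] h) (hgh : Integrable (fun ω => g ω * h ω) P) :
    Integrable (fun ω => g ω * f ω) P := by
  refine ⟨(hg.mono hm).aestronglyMeasurable.mul hf.aestronglyMeasurable, ?_⟩
  rw [hasFiniteIntegral_iff_ofReal (f := fun ω => g ω * f ω) (hg₀.mul_nonneg hf₀),
    lintegral_ofReal_mul_condExp hm hg hg₀ hf hf₀,
    ← hasFiniteIntegral_iff_ofReal (f := fun ω => g ω * P[f|m] ω)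
      (hg₀.mul_nonneg (condExp_nonneg hf₀))]
  exact (integrable_mul_condExp_of_condExp_le hm hg hg₀ hf₀ hfh hgh).hasFiniteIntegral

theorem integral_mul_le_of_condExp_le (hm : m ≤ m₀) [SigmaFinite (P.trim hm)] {g f h : Ω → ℝ}
    (hg : StronglyMeasurable[m] g) (hg₀ : 0 ≤ᵐ[P] g) (hf : Integrable f P) (hf₀ : 0 ≤ᵐ[P] f)
    (hfh : P[f|m] ≤ᵐ[P] h) (hgh : Integrable (fun ω => g ω * h ω) P) :
    ∫ ω, g ω * f ω ∂P ≤ ∫ ω, g ω * h ω ∂P := by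
  rw [integral_mul_condExp hm hg hg₀ hf hf₀]
  refine integral_mono_ae (integrable_mul_condExp_of_condExp_le hm hg hg₀ hf₀ hfh hgh) hgh ?_
  filter_upwards [hg₀, hfh] with ω hgω hFh using mul_le_mul_of_nonneg_left hFh hgω

theorem integral_mul_le_of_condExp_le_const (hm : m ≤ m₀) [SigmaFinite (P.trim hm)]
    {g f : Ω → ℝ} {d : ℝ} (hg : StronglyMeasurable[m] g) (hg₀ : 0 ≤ᵐ[P] g) (hgi : Integrable g P)
    (hf : Integrable f P) (hf₀ : 0 ≤ᵐ[P] f) (hfd : P[f|m] ≤ᵐ[P] fun _ => d) :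
    ∫ ω, g ω * f ω ∂P ≤ (∫ ω, g ω ∂P) * d :=
  (integral_mul_le_of_condExp_le hm hg hg₀ hf hf₀ hfd (hgi.mul_const d)).trans_eq
    (integral_mul_const d _)

theorem MeasureTheory.Integrable.mul_indicator_one {f : Ω → ℝ} (hf : Integrable f P) {s : Set Ω}
    (hs : MeasurableSet s) : Integrable (fun ω => f ω * s.indicator (fun _ => (1 : ℝ)) ω) P :=
  (hf.indicator hs).congr <| .of_forall fun ω => by by_cases hω : ω ∈ s <;> simp [hω]

theorem integral_mul_le_of_condExp_le_piecewise (hm : m ≤ m₀) [SigmaFinite (P.trim hm)]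
    {g f : Ω → ℝ} {A : Set Ω} {c r : ℝ} (hg : StronglyMeasurable[m] g) (hg₀ : 0 ≤ᵐ[P] g)
    (hgi : Integrable g P) (hA : MeasurableSet A) (hf : Integrable f P) (hf₀ : 0 ≤ᵐ[P] f)
    (hr : 0 ≤ r) (hfA : ∀ᵐ ω ∂P, ω ∈ A → P[f|m] ω ≤ c) (hfAc : ∀ᵐ ω ∂P, ω ∈ Aᶜ → P[f|m] ω ≤ r) :
    Integrable (fun ω => g ω * f ω) P ∧
      ∫ ω, g ω * f ω ∂P ≤ c * ∫ ω, g ω * A.indicator (fun _ => (1 : ℝ)) ω ∂P + r * ∫ ω, g ω ∂P := by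
  -- `c 1_A + r` dominates `P[f|m]` because `r ≥ 0`, and its integral against `g` is the bound.
  set h : Ω → ℝ := fun ω => c * A.indicator (fun _ => (1 : ℝ)) ω + r
  have hfh : P[f|m] ≤ᵐ[P] h := by
    filter_upwards [hfA, hfAc] with ω hωA hωAc
    by_cases hω : ω ∈ A
    · simpa [h, hω] using (hωA hω).trans (le_add_of_nonneg_right hr)
    · simpa [h, hω] using hωAc hω
  have hgA := hgi.mul_indicator_one hA
  have hgh_eq : (fun ω => g ω * h ω) = fun ω =>
      c * (g ω * A.indicator (fun _ => (1 : ℝ)) ω) + r * g ω := by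
    funext ω; ring
  have hgh : Integrable (fun ω => g ω * h ω) P := by
    rw [hgh_eq]; exact (hgA.const_mul c).add (hgi.const_mul r)
  refine ⟨integrable_mul_of_condExp_le hm hg hg₀ hf hf₀ hfh hgh, ?_⟩
  calc ∫ ω, g ω * f ω ∂P ≤ ∫ ω, g ω * h ω ∂P :=
        integral_mul_le_of_condExp_le hm hg hg₀ hf hf₀ hfh hgh
    _ = _ := by
      rw [hgh_eq, integral_add (hgA.const_mul c) (hgi.const_mul r), integral_const_mul,
        integral_const_mul]

end

/-- Iterated conditional bounds for the coarse-graining argument: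
if `E[Φ₁] ≤ 1/4`, `E[Φ₁ 1_{A₁}] ≤ 1/(8c)` and, for `k ≥ 2`,
`E[Φ_k | 𝔽_{k-1}] ≤ c` a.s., `E[Φ_k | 𝔽_{k-1}] ≤ 1/4` a.s. on `A_{k-1}ᶜ` and
`E[Φ_k 1_{A_k} | 𝔽_{k-1}] ≤ 1/(8c)` a.s., then for every `M ≥ 1`:
`E[∏_{k=1}^M Φ_k] ≤ 2^{-M}` and `E[(∏_{k=1}^M Φ_k) 1_{A_M}] ≤ 1/(c 2^{M+2})`. -/
theorem stmt_14
    {Ω : Type*} {mΩ : MeasurableSpace Ω} (P : Measure Ω) [IsProbabilityMeasure P]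
    (𝔽 : Filtration ℕ mΩ) (c : ℝ) (hc : 1 ≤ c)
    (Φ : ℕ → Ω → ℝ) (A : ℕ → Set Ω)
    (hΦ_meas : ∀ k, 1 ≤ k → StronglyMeasurable[𝔽 k] (Φ k))
    (hΦ_nonneg : ∀ k, 1 ≤ k → ∀ a, 0 ≤ Φ k a)
    (hΦ_int : ∀ k, 1 ≤ k → Integrable (Φ k) P)
    (hA_meas : ∀ k, 1 ≤ k → MeasurableSet[𝔽 k] (A k))
    (h1 : ∫ a, Φ 1 a ∂P ≤ 1/4)
    (h1A : ∫ a, Φ 1 a * (A 1).indicator (fun _ => (1:ℝ)) a ∂P ≤ 1 / (8 * c))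
    (hk : ∀ k, 2 ≤ k → P[Φ k|𝔽 (k - 1)] ≤ᵐ[P] fun _ => c)
    (hkAc : ∀ k, 2 ≤ k →
      ∀ᵐ a ∂P, a ∈ (A (k - 1))ᶜ → (P[Φ k|𝔽 (k - 1)]) a ≤ 1/4)
    (hkA : ∀ k, 2 ≤ k →
      P[fun a => Φ k a * (A k).indicator (fun _ => (1:ℝ)) a|𝔽 (k - 1)]
        ≤ᵐ[P] fun _ => 1 / (8 * c)) :
    ∀ M : ℕ, 1 ≤ M →
      (Integrable (fun a => ∏ k ∈ Finset.Icc 1 M, Φ k a) P ∧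
        ∫ a, ∏ k ∈ Finset.Icc 1 M, Φ k a ∂P ≤ 1 / 2 ^ M) ∧
      ∫ a, (∏ k ∈ Finset.Icc 1 M, Φ k a) * (A M).indicator (fun _ => (1:ℝ)) a ∂P
        ≤ 1 / (c * 2 ^ (M + 2)) := by
  have hc₀ : 0 < c := by linarith
  intro M hM
  induction M, hM using Nat.le_induction with
  | base =>
    simp only [Finset.Icc_self, Finset.prod_singleton]
    exact ⟨⟨hΦ_int 1 le_rfl, h1.trans (by norm_num)⟩, h1A.trans_eq (by ring)⟩
  | succ M hM ih =>
    obtain ⟨⟨hgi, hg_le⟩, hgA_le⟩ := ih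
    have hg : StronglyMeasurable[𝔽 M] fun a => ∏ k ∈ Finset.Icc 1 M, Φ k a :=
      Finset.stronglyMeasurable_fun_prod _ fun k hk =>
        (hΦ_meas k (Finset.mem_Icc.1 hk).1).mono (𝔽.mono (Finset.mem_Icc.1 hk).2)
    have hg₀ : 0 ≤ᵐ[P] fun a => ∏ k ∈ Finset.Icc 1 M, Φ k a :=
      .of_forall fun a => Finset.prod_nonneg fun k hk => hΦ_nonneg k (Finset.mem_Icc.1 hk).1 a
    have hf := hΦ_int (M + 1) (by omega)
    have hf₀ : 0 ≤ᵐ[P] Φ (M + 1) := .of_forall (hΦ_nonneg (M + 1) (by omega))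
    have hAM : MeasurableSet (A M) := 𝔽.le M _ (hA_meas M hM)
    have hAM₁ : MeasurableSet (A (M + 1)) := 𝔽.le _ _ (hA_meas (M + 1) (by omega))
    have hfA₀ : 0 ≤ᵐ[P] fun a => Φ (M + 1) a * (A (M + 1)).indicator (fun _ => (1 : ℝ)) a :=
      hf₀.mul_nonneg (.of_forall (Set.indicator_nonneg fun _ _ => zero_le_one))
    simp only [Finset.prod_Icc_succ_top (show 1 ≤ M + 1 by omega), mul_assoc]
    obtain ⟨hi, hle⟩ := integral_mul_le_of_condExp_le_piecewise (𝔽.le M) hg hg₀ hgi hAM hf hf₀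
      (by norm_num) ((hk (M + 1) (by omega)).mono fun _ h _ => h) (hkAc (M + 1) (by omega))
    refine ⟨⟨hi, hle.trans ?_⟩, ?_⟩
    · calc _ ≤ c * (1 / (c * 2 ^ (M + 2))) + 1 / 4 * (1 / 2 ^ M) := by gcongr
        _ = 1 / 2 ^ (M + 1) := by field_simp; ring
    · calc _ ≤ (∫ a, ∏ k ∈ Finset.Icc 1 M, Φ k a ∂P) * (1 / (8 * c)) :=
            integral_mul_le_of_condExp_le_const (𝔽.le M) hg hg₀ hgi (hf.mul_indicator_one hAM₁)
              hfA₀ (hkA (M + 1) (by omega))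
        _ ≤ 1 / 2 ^ M * (1 / (8 * c)) := by gcongr
        _ = 1 / (c * 2 ^ (M + 1 + 2)) := by field_simp; ring
end
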